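/- For the LMMSE coefficient c(ρ) = ρτκ / (ρτ∑_{k'∈P} κ_{k'} + D) with κ ≤ ∑_{k'∈P} κ_{k'} (pilot contamination, |P| ≥ 2 with positive κ_{k'}), the NMSE 1 − c(ρ) is strictly decreasing in ρ but bounded below by the strictly positive limit 1 − κ/∑_{k'∈P} κ_{k'} as ρ → ∞; i.e., pilot contamination prevents the NMSE from vanishing as transmit power grows. -/

import Mathlib

open Filter Set

/-!
Writing the coefficient as `x a / (x b + d) = a / b - (a d / b) / (x b + d)` shows that it
increases strictly to `a / b = κ / ∑ κ_{k'}`, never reaching it since `d > 0`. That limit is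
`< 1` because the other users sharing the pilot contribute positive powers to `∑ κ_{k'}`.
-/

section RationalCoefficient

variable {a b d : ℝ}

theorem strictMonoOn_mul_div_mul_add (ha : 0 < a) (hb : 0 ≤ b) (hd : 0 < d) :
    StrictMonoOn (fun x : ℝ => x * a / (x * b + d)) (Ioi 0) := by
  intro x (hx : 0 < x) y (hy : 0 < y) hxy
  have hdx : 0 < x * b + d := by positivity
  have hdy : 0 < y * b + d := by positivity
  rw [div_lt_div_iff₀ hdx hdy]
  nlinarith [mul_lt_mul_of_pos_right hxy (mul_pos ha hd)]

theorem mul_div_mul_add_lt_div (ha : 0 < a) (hb : 0 < b) (hd : 0 < d) {x : ℝ} (hx : 0 < x) :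
    x * a / (x * b + d) < a / b := by
  rw [div_lt_div_iff₀ (by positivity) hb]
  nlinarith [mul_pos ha hd]

theorem tendsto_mul_div_mul_add_atTop (hb : b ≠ 0) (d : ℝ) :
    Tendsto (fun x : ℝ => x * a / (x * b + d)) atTop (nhds (a / b)) := by
  have hlim : Tendsto (fun x : ℝ => a / (b + d / x)) atTop (nhds (a / (b + 0))) :=
    tendsto_const_nhds.div (tendsto_const_nhds.add (tendsto_const_nhds.div_atTop tendsto_id))
      (by simpa using hb)
  rw [add_zero] at hlim
  refine hlim.congr' ?_
  filter_upwards [eventually_gt_atTop 0] with x hx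
  field_simp

end RationalCoefficient

theorem pilot_contamination_nmse_floor_general {ι : Type*}
    (P : Finset ι) (κf : ι → ℝ) (k₀ : ι) (hk₀ : k₀ ∈ P) (hP : 2 ≤ P.card)
    (hκpos : ∀ k' ∈ P, 0 < κf k') (τ D : ℝ) (hτ : 0 < τ) (hD : 0 < D) :
    StrictAntiOn
        (fun ρ : ℝ => 1 - ρ * τ * κf k₀ / (ρ * τ * (∑ k' ∈ P, κf k') + D))
        (Set.Ioi 0) ∧
      (∀ ρ : ℝ, 0 < ρ →
        1 - κf k₀ / (∑ k' ∈ P, κf k')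
          < 1 - ρ * τ * κf k₀ / (ρ * τ * (∑ k' ∈ P, κf k') + D)) ∧
      Tendsto (fun ρ : ℝ => 1 - ρ * τ * κf k₀ / (ρ * τ * (∑ k' ∈ P, κf k') + D))
        atTop (nhds (1 - κf k₀ / (∑ k' ∈ P, κf k'))) ∧
      0 < 1 - κf k₀ / (∑ k' ∈ P, κf k') := by
  set S := ∑ k' ∈ P, κf k'
  have hκ : 0 < κf k₀ := hκpos k₀ hk₀
  have hκS : κf k₀ < S := by
    obtain ⟨k, hk, hkk₀⟩ := P.exists_mem_ne hP k₀
    exact Finset.single_lt_sum hkk₀ hk₀ hk (hκpos k hk) fun k' hk' _ => (hκpos k' hk').le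
  have hS : 0 < S := hκ.trans hκS
  have hlim : κf k₀ / S = τ * κf k₀ / (τ * S) := (mul_div_mul_left _ _ hτ.ne').symm
  simp only [mul_assoc, hlim]
  refine ⟨fun x hx y hy hxy => ?_, fun ρ hρ => ?_, ?_, ?_⟩
  · exact sub_lt_sub_left
      (strictMonoOn_mul_div_mul_add (by positivity) (by positivity) hD hx hy hxy) 1
  · exact sub_lt_sub_left (mul_div_mul_add_lt_div (by positivity) (by positivity) hD hρ) 1
  · exact tendsto_const_nhds.sub (tendsto_mul_div_mul_add_atTop (by positivity) D)
  · rw [← hlim, sub_pos]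
    exact (div_lt_one hS).mpr hκS

/-- For the LMMSE coefficient
`c(ρ) = ρτκ / (ρτ ∑_{k'∈P} κ_{k'} + D)` with pilot contamination (`|P| ≥ 2`, all
`κ_{k'} > 0`, `κ = κ_{k₀}` for some `k₀ ∈ P`), the NMSE `1 − c(ρ)` is strictly
decreasing in `ρ` but bounded below by the strictly positive limit
`1 − κ / ∑_{k'∈P} κ_{k'}` as `ρ → ∞`: pilot contamination prevents the NMSE from
vanishing as the transmit power grows. -/
theorem pilot_contamination_nmse_floor {ι : Type*} [DecidableEq ι]
    (P : Finset ι) (κf : ι → ℝ) (k₀ : ι) (hk₀ : k₀ ∈ P) (hP : 2 ≤ P.card)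
    (hκpos : ∀ k' ∈ P, 0 < κf k') (τ D : ℝ) (hτ : 0 < τ) (hD : 0 < D) :
    StrictAntiOn
        (fun ρ : ℝ => 1 - ρ * τ * κf k₀ / (ρ * τ * (∑ k' ∈ P, κf k') + D))
        (Set.Ioi 0) ∧
      (∀ ρ : ℝ, 0 < ρ →
        1 - κf k₀ / (∑ k' ∈ P, κf k')
          < 1 - ρ * τ * κf k₀ / (ρ * τ * (∑ k' ∈ P, κf k') + D)) ∧
      Tendsto (fun ρ : ℝ => 1 - ρ * τ * κf k₀ / (ρ * τ * (∑ k' ∈ P, κf k') + D))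
        atTop (nhds (1 - κf k₀ / (∑ k' ∈ P, κf k'))) ∧
      0 < 1 - κf k₀ / (∑ k' ∈ P, κf k') :=
  pilot_contamination_nmse_floor_general P κf k₀ hk₀ hP hκpos τ D hτ hD
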